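/- Let Rules be a finite set of normalized SLEEC rules and r ∈ Rules. Then r is vacuously conflicting in Rules if and only if r is situationally conflicting with respect to every r-triggering situation (σ₀ᵏ, M⃗ₖ). -/

import Mathlib

namespace SleecForm

/-! ## Syntax of normalized SLEEC DSL -/

/-- SLEEC terms over measure symbols `M`. -/
inductive STerm (M : Type) : Type where
  | const : ℕ → STerm M
  | meas  : M → STerm M
  | neg   : STerm M → STerm M
  | add   : STerm M → STerm M → STerm M
  | smul  : ℕ → STerm M → STerm M
  deriving DecidableEq

/-- Evaluation of a SLEEC term under a measure assignment. -/
def STerm.eval {M : Type} (v : M → ℕ) : STerm M → ℤ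
  | .const c => (c : ℤ)
  | .meas m  => (v m : ℤ)
  | .neg t   => - t.eval v
  | .add a b => a.eval v + b.eval v
  | .smul c t => (c : ℤ) * t.eval v

/-- SLEEC propositions over measure symbols `M`. -/
inductive SProp (M : Type) : Type where
  | tt  : SProp M
  | ff  : SProp M
  | eq  : STerm M → STerm M → SProp M
  | ge  : STerm M → STerm M → SProp M
  | not : SProp M → SProp M
  | and : SProp M → SProp M → SProp M
  | or  : SProp M → SProp M → SProp M
  deriving DecidableEq

/-- Evaluation of a SLEEC proposition under a measure assignment. -/
def SProp.eval {M : Type} (v : M → ℕ) : SProp M → Prop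
  | .tt => True
  | .ff => False
  | .eq a b => a.eval v = b.eval v
  | .ge a b => a.eval v ≥ b.eval v
  | .not p => ¬ p.eval v
  | .and p q => p.eval v ∧ q.eval v
  | .or p q => p.eval v ∨ q.eval v

/-- An obligation: the event must (`pos`) or must not (`neg`) occur within the time limit. -/
inductive Oblig (E M : Type) : Type where
  | pos : E → STerm M → Oblig E M
  | neg : E → STerm M → Oblig E M
  deriving DecidableEq

/-- A conditional obligation `p ⇒ ob`. -/
structure CondOb (E M : Type) : Type where
  cond : SProp M
  ob   : Oblig E M
  deriving DecidableEq

/-- An obligation chain `cob₁ otherwise cob₂ ... otherwise cobₘ`; all conditional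
obligations before the last one must be positive, which is enforced structurally
(`cons p e t rest` is the positive conditional obligation `p ⇒ (e within t)`
followed by the rest of the chain). -/
inductive Chain (E M : Type) : Type where
  | last : CondOb E M → Chain E M
  | cons : SProp M → E → STerm M → Chain E M → Chain E M
  deriving DecidableEq

/-- A normalized SLEEC rule `when e and p then obc`. -/
structure SRule (E M : Type) : Type where
  event : E
  cond  : SProp M
  chain : Chain E M
  deriving DecidableEq

/-! ## Traces -/

/-- A state of a trace: the set of occurring events, the measure assignment and
the time value. -/
structure State (E M : Type) : Type where
  evts : Set E
  msr  : M → ℕ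
  ts   : ℕ

/-- A trace: a finite sequence of states with strictly increasing time values. -/
structure Trace (E M : Type) : Type where
  states : List (State E M)
  increasing : states.Pairwise (fun s₁ s₂ => s₁.ts < s₂.ts)

variable {E M : Type}

/-! ## Semantics -/

/-- Fulfillment of an obligation subject to time point `i`. -/
def Oblig.fulfilled (l : List (State E M)) (i : Fin l.length) : Oblig E M → Prop
  | .pos e t => ∃ j : Fin l.length, i ≤ j ∧ e ∈ (l.get j).evts ∧
      (l.get i).ts ≤ (l.get j).ts ∧
      ((l.get j).ts : ℤ) ≤ ((l.get i).ts : ℤ) + t.eval (l.get i).msr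
  | .neg e t => ∀ j : Fin l.length,
      (l.get i).ts ≤ (l.get j).ts →
      ((l.get j).ts : ℤ) ≤ ((l.get i).ts : ℤ) + t.eval (l.get i).msr →
      e ∉ (l.get j).evts

/-- Violation of an obligation (triggered at time point `i`) at time point `j`. -/
def Oblig.violatedAt (l : List (State E M)) (i j : Fin l.length) : Oblig E M → Prop
  | .pos e t => ((l.get j).ts : ℤ) = ((l.get i).ts : ℤ) + t.eval (l.get i).msr ∧
      ∀ j' : Fin l.length, i ≤ j' → j' ≤ j → e ∉ (l.get j').evts
  | .neg e t => (l.get i).ts ≤ (l.get j).ts ∧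
      ((l.get j).ts : ℤ) ≤ ((l.get i).ts : ℤ) + t.eval (l.get i).msr ∧
      e ∈ (l.get j).evts ∧
      ∀ j' : Fin l.length, i ≤ j' → j' < j → e ∉ (l.get j').evts

/-- Fulfillment of a conditional obligation subject to time point `i`. -/
def CondOb.fulfilled (l : List (State E M)) (i : Fin l.length) (c : CondOb E M) : Prop :=
  ¬ c.cond.eval (l.get i).msr ∨ c.ob.fulfilled l i

/-- Violation of a conditional obligation (triggered at `i`) at time point `j`. -/
def CondOb.violatedAt (l : List (State E M)) (i j : Fin l.length) (c : CondOb E M) : Prop :=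
  c.cond.eval (l.get i).msr ∧ c.ob.violatedAt l i j

/-- Fulfillment of an obligation chain subject to time point `i`. -/
def Chain.fulfilled (l : List (State E M)) : Chain E M → Fin l.length → Prop
  | .last c, i => CondOb.fulfilled l i c
  | .cons p e t rest, i =>
      CondOb.fulfilled l i (CondOb.mk p (.pos e t)) ∨
      ∃ j : Fin l.length, CondOb.violatedAt l i j (CondOb.mk p (.pos e t)) ∧
        Chain.fulfilled l rest j

/-- A trace fulfills a rule, written `σ ⊨ r`. -/
def Trace.sat (σ : Trace E M) (r : SRule E M) : Prop :=
  ∀ i : Fin σ.states.length, r.event ∈ (σ.states.get i).evts →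
    r.cond.eval (σ.states.get i).msr → Chain.fulfilled σ.states r.chain i

/-- The behaviour `L(Rules)` accepted by a rule set. -/
def lang (Rules : Set (SRule E M)) : Set (Trace E M) :=
  {σ | ∀ r ∈ Rules, σ.sat r}

/-! ## Facts -/

/-- A SLEEC fact: `exists e and p while obc` (`posF`), `exists e and p while not obc`
(`negF`), or the degenerate `exists e and p while ⊤` (`topF`). -/
inductive SFact (E M : Type) : Type where
  | posF : E → SProp M → Chain E M → SFact E M
  | negF : E → SProp M → Chain E M → SFact E M
  | topF : E → SProp M → SFact E M
  deriving DecidableEq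

/-- Satisfaction of a fact by a trace. -/
def Trace.satFact (σ : Trace E M) : SFact E M → Prop
  | .posF e p obc => ∃ i : Fin σ.states.length, e ∈ (σ.states.get i).evts ∧
      p.eval (σ.states.get i).msr ∧ Chain.fulfilled σ.states obc i
  | .negF e p obc => ∃ i : Fin σ.states.length, e ∈ (σ.states.get i).evts ∧
      p.eval (σ.states.get i).msr ∧ ¬ Chain.fulfilled σ.states obc i
  | .topF e p => ∃ i : Fin σ.states.length, e ∈ (σ.states.get i).evts ∧
      p.eval (σ.states.get i).msr

/-- The behaviour `L(Facts)` of a set of facts. -/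
def langF (Facts : Set (SFact E M)) : Set (Trace E M) :=
  {σ | ∀ f ∈ Facts, σ.satFact f}

/-! ## Well-formedness notions -/

/-- The rule `r` is vacuously conflicting in `Rules`. -/
def VacuouslyConflicting (Rules : Set (SRule E M)) (r : SRule E M) : Prop :=
  ∀ σ ∈ lang Rules, ∀ i : Fin σ.states.length,
    r.event ∉ (σ.states.get i).evts ∨ ¬ r.cond.eval (σ.states.get i).msr

/-- The triggering fact `Trig(r)` of a rule: `exists e and p while ⊤`. -/
def Trig (r : SRule E M) : SFact E M := .topF r.event r.cond

/-- The noncompliant fact of a rule: `exists e and p while not obc`. -/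
def Noncompliant (r : SRule E M) : SFact E M := .negF r.event r.cond r.chain

/-- The rule `r` is redundant in `Rules`. -/
def Redundant (Rules : Set (SRule E M)) (r : SRule E M) : Prop :=
  lang (Rules \ {r}) ⊆ lang Rules

/-! ## Situations and situational conflicts -/

/-- A situation `(σ₀ᵏ, M⃗ₖ)`: a trace prefix together with partial measure
assignments for the time points after the prefix (the `n`-th element of the
sequence constrains the measures of the `n`-th time point after the last
time point `k` of the prefix; `Option.none` means undefined). -/
structure Situation (E M : Type) : Type where
  prefixTr : Trace E M
  partialMsr : ℕ → M → Option ℕ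

/-- The situation is `r`-triggering: its last state triggers `r`. -/
def Situation.Triggering (s : Situation E M) (r : SRule E M) : Prop :=
  ∃ h : s.prefixTr.states ≠ [],
    r.event ∈ (s.prefixTr.states.getLast h).evts ∧
    r.cond.eval (s.prefixTr.states.getLast h).msr

/-- The rule set `Rules` is situationally conflicting with respect to the situation `s`:
no trace extending the prefix of `s` and agreeing with the partial measures of `s`
wherever defined belongs to `L(Rules)`. -/
def SituationallyConflicting (Rules : Set (SRule E M)) (s : Situation E M) : Prop :=
  ¬ ∃ σ : Trace E M, s.prefixTr.states <+: σ.states ∧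
      (∀ i : Fin σ.states.length, s.prefixTr.states.length - 1 < i.val →
        ∀ m : M, ∀ val : ℕ,
          s.partialMsr (i.val - (s.prefixTr.states.length - 1)) m = some val →
          (σ.states.get i).msr m = val) ∧
      σ ∈ lang Rules

/-! ## Bounded semantics (non-violation up to the end of a prefix) -/

/-- No witnessed violation of an obligation triggered at `i` within the prefix `l`. -/
def Oblig.noViol (l : List (State E M)) (i : Fin l.length) (ob : Oblig E M) : Prop :=
  ¬ ∃ j : Fin l.length, i ≤ j ∧ ob.violatedAt l i j

/-- No witnessed violation of a conditional obligation triggered at `i`. -/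
def CondOb.noViol (l : List (State E M)) (i : Fin l.length) (c : CondOb E M) : Prop :=
  c.cond.eval (l.get i).msr → c.ob.noViol l i

/-- No witnessed violation of an obligation chain triggered at `i` within the prefix. -/
def Chain.noViol (l : List (State E M)) : Chain E M → Fin l.length → Prop
  | .last c, i => CondOb.noViol l i c
  | .cons p e t rest, i =>
      CondOb.noViol l i (CondOb.mk p (.pos e t)) ∨
      ∃ j : Fin l.length, CondOb.violatedAt l i j (CondOb.mk p (.pos e t)) ∧
        Chain.noViol l rest j

/-- `σ₀ᵏ ⊢ᵏ Rules`: no rule of `Rules` is violated by the prefix `l` under the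
bounded semantics. -/
def NoViolation (Rules : Set (SRule E M)) (l : List (State E M)) : Prop :=
  ∀ r ∈ Rules, ∀ i : Fin l.length, r.event ∈ (l.get i).evts →
    r.cond.eval (l.get i).msr → Chain.noViol l r.chain i

/-! ## Bounded fulfillment/violation, used for states of obligations -/

/-- Bounded fulfillment of an obligation triggered at `i`, witnessed up to time point `j`. -/
def Oblig.fulfilledBy (l : List (State E M)) (i j : Fin l.length) : Oblig E M → Prop
  | .pos e t => ∃ j' : Fin l.length, i ≤ j' ∧ j' ≤ j ∧ e ∈ (l.get j').evts ∧
      (l.get i).ts ≤ (l.get j').ts ∧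
      ((l.get j').ts : ℤ) ≤ ((l.get i).ts : ℤ) + t.eval (l.get i).msr
  | .neg e t => ((l.get i).ts : ℤ) + t.eval (l.get i).msr < ((l.get j).ts : ℤ) ∧
      ∀ j' : Fin l.length, (l.get i).ts ≤ (l.get j').ts →
        ((l.get j').ts : ℤ) ≤ ((l.get i).ts : ℤ) + t.eval (l.get i).msr →
        e ∉ (l.get j').evts

/-- Bounded violation of an obligation triggered at `i`, witnessed up to time point `j`. -/
def Oblig.violatedBy (l : List (State E M)) (i j : Fin l.length) (ob : Oblig E M) : Prop :=
  ∃ j' : Fin l.length, i ≤ j' ∧ j' ≤ j ∧ ob.violatedAt l i j'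

/-- An obligation triggered at `i` is active at `j`: neither fulfilled nor violated
at any time point up to `j`. -/
def Oblig.activeAt (l : List (State E M)) (i j : Fin l.length) (ob : Oblig E M) : Prop :=
  i ≤ j ∧ ¬ ob.fulfilledBy l i j ∧ ¬ ob.violatedBy l i j

/-- Bounded fulfillment of a conditional obligation triggered at `i`. -/
def CondOb.fulfilledBy (l : List (State E M)) (i j : Fin l.length) (c : CondOb E M) : Prop :=
  ¬ c.cond.eval (l.get i).msr ∨ c.ob.fulfilledBy l i j

/-- Bounded fulfillment of an obligation chain triggered at `i`, up to time point `j`. -/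
def Chain.fulfilledBy (l : List (State E M)) (j : Fin l.length) :
    Chain E M → Fin l.length → Prop
  | .last c, i => CondOb.fulfilledBy l i j c
  | .cons p e t rest, i =>
      CondOb.fulfilledBy l i j (CondOb.mk p (.pos e t)) ∨
      ∃ j' : Fin l.length, j' ≤ j ∧ CondOb.violatedAt l i j' (CondOb.mk p (.pos e t)) ∧
        Chain.fulfilledBy l j rest j'

/-- Violation of an obligation chain triggered at `i`, at time point `j`. -/
def Chain.violatedAt (l : List (State E M)) : Chain E M → Fin l.length → Fin l.length → Prop
  | .last c, i, j => CondOb.violatedAt l i j c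
  | .cons p e t rest, i, j => ∃ j' : Fin l.length, i ≤ j' ∧ j' ≤ j ∧
      CondOb.violatedAt l i j' (CondOb.mk p (.pos e t)) ∧ Chain.violatedAt l rest j' j

/-! ## States of obligations: triggered, forced and blocked -/

mutual
  /-- The obligation chain is triggered at the given time point (within the
  situation prefix `l`, for the rule set `Rules`). -/
  inductive ChainTrig (Rules : Set (SRule E M)) (l : List (State E M)) :
      Chain E M → Fin l.length → Prop where
    | ofRule (r : SRule E M) (hr : r ∈ Rules) (i : Fin l.length)
        (he : r.event ∈ (l.get i).evts) (hp : r.cond.eval (l.get i).msr) :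
        ChainTrig Rules l r.chain i
    | tailViol (p : SProp M) (e : E) (t : STerm M) (rest : Chain E M) (i j : Fin l.length)
        (h : ChainTrig Rules l (.cons p e t rest) i)
        (hv : CondOb.violatedAt l i j (CondOb.mk p (.pos e t))) :
        ChainTrig Rules l rest j
    | tailBlocked (p : SProp M) (e : E) (t : STerm M) (rest : Chain E M) (i : Fin l.length)
        (h : ChainTrig Rules l (.cons p e t rest) i)
        (hb : CondBlocked Rules l (CondOb.mk p (.pos e t)) i i) :
        ChainTrig Rules l rest i

  /-- The obligation is triggered at the given time point. -/
  inductive ObTrig (Rules : Set (SRule E M)) (l : List (State E M)) :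
      Oblig E M → Fin l.length → Prop where
    | ofLast (c : CondOb E M) (i : Fin l.length)
        (h : ChainTrig Rules l (.last c) i) (hp : c.cond.eval (l.get i).msr) :
        ObTrig Rules l c.ob i
    | ofCons (p : SProp M) (e : E) (t : STerm M) (rest : Chain E M) (i : Fin l.length)
        (h : ChainTrig Rules l (.cons p e t rest) i) (hp : p.eval (l.get i).msr) :
        ObTrig Rules l (.pos e t) i

  /-- The obligation chain, triggered at `i`, is forced at `j` (`j` at least the
  last time point `k` of the situation): it is active at `j`. -/
  inductive ChainForced (Rules : Set (SRule E M)) (l : List (State E M)) :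
      Chain E M → Fin l.length → Fin l.length → Prop where
    | ofActive (obc : Chain E M) (i j : Fin l.length)
        (ht : ChainTrig Rules l obc i) (hij : i ≤ j) (hk : l.length - 1 ≤ j.val)
        (hnf : ¬ Chain.fulfilledBy l j obc i)
        (hnv : ¬ ∃ j' : Fin l.length, j' ≤ j ∧ Chain.violatedAt l obc i j') :
        ChainForced Rules l obc i j

  /-- The conditional obligation, triggered at `i`, is forced at `j`. -/
  inductive CondForced (Rules : Set (SRule E M)) (l : List (State E M)) :
      CondOb E M → Fin l.length → Fin l.length → Prop where
    | ofLast (c : CondOb E M) (i j : Fin l.length)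
        (h : ChainForced Rules l (.last c) i j) :
        CondForced Rules l c i j
    | ofCons (p : SProp M) (e : E) (t : STerm M) (rest : Chain E M) (i j : Fin l.length)
        (h : ChainForced Rules l (.cons p e t rest) i j)
        (j' : Fin l.length)
        (hj' : ((l.get j').ts : ℤ) = ((l.get i).ts : ℤ) + t.eval (l.get i).msr)
        (hb : ChainBlocked Rules l rest j' j) :
        CondForced Rules l (CondOb.mk p (.pos e t)) i j

  /-- The obligation, triggered at `i`, is forced at `j`. -/
  inductive ObForced (Rules : Set (SRule E M)) (l : List (State E M)) :
      Oblig E M → Fin l.length → Fin l.length → Prop where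
    | intro (c : CondOb E M) (i j : Fin l.length)
        (h : CondForced Rules l c i j) (hp : c.cond.eval (l.get i).msr)
        (ht : ObTrig Rules l c.ob i) :
        ObForced Rules l c.ob i j

  /-- The obligation, triggered at `i`, is blocked at `j`: it is active at `j` and a
  conflicting forced obligation exists. -/
  inductive ObBlocked (Rules : Set (SRule E M)) (l : List (State E M)) :
      Oblig E M → Fin l.length → Fin l.length → Prop where
    | pos (e : E) (t : STerm M) (i j : Fin l.length)
        (ht : ObTrig Rules l (.pos e t) i)
        (hact : Oblig.activeAt l i j (.pos e t))
        (t' : STerm M) (i' : Fin l.length)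
        (hf : ObForced Rules l (.neg e t') i' j)
        (hle : ((l.get i).ts : ℤ) + t.eval (l.get i).msr ≤
               ((l.get i').ts : ℤ) + t'.eval (l.get i').msr) :
        ObBlocked Rules l (.pos e t) i j
    | neg (e : E) (t : STerm M) (i j : Fin l.length)
        (ht : ObTrig Rules l (.neg e t) i)
        (hact : Oblig.activeAt l i j (.neg e t))
        (t' : STerm M) (i' : Fin l.length)
        (hf : ObForced Rules l (.pos e t') i' j)
        (hge : ((l.get i).ts : ℤ) + t.eval (l.get i).msr ≥
               ((l.get i').ts : ℤ) + t'.eval (l.get i').msr) :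
        ObBlocked Rules l (.neg e t) i j

  /-- The conditional obligation, triggered at `i`, is blocked at `j`. -/
  inductive CondBlocked (Rules : Set (SRule E M)) (l : List (State E M)) :
      CondOb E M → Fin l.length → Fin l.length → Prop where
    | intro (c : CondOb E M) (i j : Fin l.length)
        (hb : ObBlocked Rules l c.ob i j) (hp : c.cond.eval (l.get j).msr) :
        CondBlocked Rules l c i j

  /-- The obligation chain, triggered at `i`, is blocked at `j`. -/
  inductive ChainBlocked (Rules : Set (SRule E M)) (l : List (State E M)) :
      Chain E M → Fin l.length → Fin l.length → Prop where
    | ofLast (c : CondOb E M) (i j : Fin l.length)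
        (h : CondBlocked Rules l c i j) :
        ChainBlocked Rules l (.last c) i j
    | ofCons (p : SProp M) (e : E) (t : STerm M) (rest : Chain E M) (i j : Fin l.length)
        (h : CondBlocked Rules l (CondOb.mk p (.pos e t)) i j)
        (j' : Fin l.length)
        (hj' : ((l.get j').ts : ℤ) = ((l.get i).ts : ℤ) + t.eval (l.get i).msr)
        (hb : ChainBlocked Rules l rest j' j) :
        ChainBlocked Rules l (.cons p e t rest) i j
end

/-! ## FOL* : first-order logic over relational objects -/

/-- A FOL* signature: a type of classes, and for each class a type of attribute names. -/
structure FOLSig : Type 1 where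
  Class : Type
  attr : Class → Type

/-- FOL* terms (linear integer arithmetic over attributes of object variables). -/
inductive FTerm (S : FOLSig) : Type where
  | const : ℤ → FTerm S
  | attr : (x : ℕ) → (c : S.Class) → S.attr c → FTerm S
  | neg : FTerm S → FTerm S
  | add : FTerm S → FTerm S → FTerm S
  | smul : ℤ → FTerm S → FTerm S

/-- FOL* formulas; quantifiers range over relational objects of a class. -/
inductive FForm (S : FOLSig) : Type where
  | tt : FForm S
  | ff : FForm S
  | eq : FTerm S → FTerm S → FForm S
  | gt : FTerm S → FTerm S → FForm S
  | not : FForm S → FForm S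
  | and : FForm S → FForm S → FForm S
  | exis : (c : S.Class) → (x : ℕ) → FForm S → FForm S
  | all : (c : S.Class) → (x : ℕ) → FForm S → FForm S

/-- Derived disjunction. -/
def FForm.or {S : FOLSig} (a b : FForm S) : FForm S := .not (.and (.not a) (.not b))

/-- Derived implication. -/
def FForm.imp {S : FOLSig} (a b : FForm S) : FForm S := FForm.or (.not a) b

/-- Derived `≤`. -/
def FForm.le {S : FOLSig} (a b : FTerm S) : FForm S := .not (.gt a b)

/-- A finite domain of relational objects together with a valuation: for each class a
finite set of object identifiers, and for each object its `ext` flag and integer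
attribute values.  This is exactly a candidate satisfying solution `(D, v)`. -/
structure FOLStructure (S : FOLSig) : Type where
  dom : S.Class → Finset ℕ
  ext : (c : S.Class) → ℕ → Prop
  val : (c : S.Class) → ℕ → S.attr c → ℤ

/-- Term evaluation in a structure, for an assignment `ν` of object variables. -/
def FTerm.eval {S : FOLSig} (σ : FOLStructure S) (ν : ℕ → ℕ) : FTerm S → ℤ
  | .const z => z
  | .attr x c a => σ.val c (ν x) a
  | .neg t => - t.eval σ ν
  | .add a b => a.eval σ ν + b.eval σ ν
  | .smul z t => z * t.eval σ ν

/-- The grounding semantics of FOL*: existential quantifiers range over existing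
(`ext`) objects of the domain of the class, universal ones likewise. -/
def FForm.holds {S : FOLSig} (σ : FOLStructure S) : (ℕ → ℕ) → FForm S → Prop
  | _, .tt => True
  | _, .ff => False
  | ν, .eq a b => a.eval σ ν = b.eval σ ν
  | ν, .gt a b => a.eval σ ν > b.eval σ ν
  | ν, .not φ => ¬ FForm.holds σ ν φ
  | ν, .and φ ψ => FForm.holds σ ν φ ∧ FForm.holds σ ν ψ
  | ν, .exis c x φ => ∃ o ∈ σ.dom c, σ.ext c o ∧ FForm.holds σ (Function.update ν x o) φ
  | ν, .all c x φ => ∀ o ∈ σ.dom c, σ.ext c o → FForm.holds σ (Function.update ν x o) φ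

/-- A FOL* formula is satisfiable iff it has a satisfying solution `(D, v)`. -/
def FForm.satisfiable {S : FOLSig} (φ : FForm S) : Prop :=
  ∃ σ : FOLStructure S, FForm.holds σ (fun _ => 0) φ

/-! ## The FOL* signature of SLEEC and the translation `T` -/

/-- The FOL* signature for SLEEC: one class per event (`some e`), carrying a single
`time` attribute, and one class (`none`) for measures, carrying a `time` attribute
(`none`) and one attribute per measure (`some m`). -/
def sleecSig (E M : Type) : FOLSig where
  Class := Option E
  attr := fun c => match c with
    | none => Option M
    | some _ => PUnit

/-- The `time` attribute of an event object. -/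
def timeE (x : ℕ) (e : E) : FTerm (sleecSig E M) := .attr x (some e) PUnit.unit

/-- The `time` attribute of a measure object. -/
def timeM (x : ℕ) : FTerm (sleecSig E M) := .attr x none (none : Option M)

/-- The measure attribute `m` of a measure object. -/
def measT (x : ℕ) (m : M) : FTerm (sleecSig E M) := .attr x none (some m : Option M)

/-- Translation `T*` of SLEEC terms, reading the measures at object variable `xM`. -/
def trTerm (xM : ℕ) : STerm M → FTerm (sleecSig E M)
  | .const c => .const (c : ℤ)
  | .meas m => measT xM m
  | .neg t => .neg (trTerm xM t)
  | .add a b => .add (trTerm xM a) (trTerm xM b)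
  | .smul c t => .smul (c : ℤ) (trTerm xM t)

/-- Translation `T*` of SLEEC propositions. -/
def trProp (xM : ℕ) : SProp M → FForm (sleecSig E M)
  | .tt => .tt
  | .ff => .ff
  | .eq a b => .eq (trTerm xM a) (trTerm xM b)
  | .ge a b => FForm.or (.gt (trTerm xM a) (trTerm xM b)) (.eq (trTerm xM a) (trTerm xM b))
  | .not p => .not (trProp xM p)
  | .and p q => .and (trProp xM p) (trProp xM q)
  | .or p q => FForm.or (trProp xM p) (trProp xM q)

/-- `T*((e within t), o_M)`: the event occurs within the window; `f` is a fresh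
variable name. -/
def trObPos (xM f : ℕ) (e : E) (t : STerm M) : FForm (sleecSig E M) :=
  .exis (some e) f (.and (FForm.le (timeM xM) (timeE f e))
                         (FForm.le (timeE f e) (.add (timeM xM) (trTerm xM t))))

/-- `T*` of an obligation. -/
def trOb (xM f : ℕ) : Oblig E M → FForm (sleecSig E M)
  | .pos e t => trObPos xM f e t
  | .neg e t => .not (trObPos xM f e t)

/-- `Violation((e within t), o_M, o_Mj)`. -/
def trViolPos (xM xMj f : ℕ) (e : E) (t : STerm M) : FForm (sleecSig E M) :=
  .and (.eq (timeM xMj) (.add (timeM xM) (trTerm xM t))) (.not (trObPos xM f e t))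

/-- `T*` of a conditional obligation. -/
def trCondOb (xM f : ℕ) (c : CondOb E M) : FForm (sleecSig E M) :=
  FForm.imp (trProp xM c.cond) (trOb xM f c.ob)

/-- `T*` of an obligation chain. -/
def trChain (xM f : ℕ) : Chain E M → FForm (sleecSig E M)
  | .last c => trCondOb xM f c
  | .cons p e t rest =>
      FForm.or (trCondOb xM f (CondOb.mk p (.pos e t)))
        (.exis none f (.and (.and (trProp xM p) (trViolPos xM f (f+1) e t))
                            (trChain f (f+1) rest)))

/-- `T` of a normalized SLEEC rule. -/
def trRule (r : SRule E M) : FForm (sleecSig E M) :=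
  .all (some r.event) 0 (.exis none 1
    (.and (.eq (timeM 1) (timeE 0 r.event))
          (FForm.imp (trProp 1 r.cond) (trChain 1 2 r.chain))))

/-- `T` of a SLEEC fact. -/
def trFact : SFact E M → FForm (sleecSig E M)
  | .posF e p obc => .exis (some e) 0 (.exis none 1
      (.and (.eq (timeM 1) (timeE 0 e)) (.and (trProp 1 p) (trChain 1 2 obc))))
  | .negF e p obc => .exis (some e) 0 (.exis none 1
      (.and (.eq (timeM 1) (timeE 0 e)) (.and (trProp 1 p) (.not (trChain 1 2 obc)))))
  | .topF e p => .exis (some e) 0 (.exis none 1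
      (.and (.eq (timeM 1) (timeE 0 e)) (.and (trProp 1 p) .tt)))

/-- Finite conjunction. -/
def bigAnd {S : FOLSig} (L : List (FForm S)) : FForm S := L.foldr .and .tt

/-- `T` of a (finite, listed) set of rules: the conjunction of the member translations. -/
def trRules (Rules : List (SRule E M)) : FForm (sleecSig E M) := bigAnd (Rules.map trRule)

/-- `T` of a (finite, listed) set of facts. -/
def trFacts (Facts : List (SFact E M)) : FForm (sleecSig E M) := bigAnd (Facts.map trFact)

/-- The measure-consistency axiom: measure objects with equal `time` agree on all
attributes. -/
noncomputable def axiomMC (E M : Type) [Fintype M] : FForm (sleecSig E M) :=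
  .all none 0 (.all none 1 (FForm.imp (.eq (timeM 0) (timeM 1))
    (bigAnd ((FForm.eq (timeM 0) (timeM 1)) ::
      (Finset.univ : Finset M).toList.map (fun m => FForm.eq (measT 0 m) (measT 1 m))))))

/-! ## List-based behaviours and well-formedness (used for the FOL* statements) -/

/-- `L(Rules)` for a rule set given as a list. -/
def langL (Rules : List (SRule E M)) : Set (Trace E M) := {σ | ∀ r ∈ Rules, σ.sat r}

/-- `L(Facts)` for a fact set given as a list. -/
def langFL (Facts : List (SFact E M)) : Set (Trace E M) := {σ | ∀ f ∈ Facts, σ.satFact f}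

/-- Vacuous conflict, for a rule set given as a list. -/
def VacuouslyConflictingL (Rules : List (SRule E M)) (r : SRule E M) : Prop :=
  ∀ σ ∈ langL Rules, ∀ i : Fin σ.states.length,
    r.event ∉ (σ.states.get i).evts ∨ ¬ r.cond.eval (σ.states.get i).msr

/-- Redundancy, for a rule set given as a list (`Rules \ {r}` is obtained by
removing all occurrences of `r`). -/
def RedundantL [DecidableEq E] [DecidableEq M] (Rules : List (SRule E M)) (r : SRule E M) :
    Prop :=
  langL (Rules.filter (· ≠ r)) ⊆ langL Rules

/-! ## Original SLEEC rules and normalization -/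

/-- Responses of original (unnormalized) SLEEC rules. -/
inductive Resp (E M : Type) : Type where
  | pos : E → STerm M → Resp E M
  | neg : E → STerm M → Resp E M
  | otherwise : E → STerm M → Resp E M → Resp E M
  | unless : Resp E M → SProp M → Resp E M
  | unlessThen : Resp E M → SProp M → Resp E M → Resp E M

/-- The normalization function `Norm`, mapping a response and an accumulated
trigger condition to the list of normalized obligation chains. -/
def norm : Resp E M → SProp M → List (Chain E M)
  | .pos e t, q => [.last (CondOb.mk q (.pos e t))]
  | .neg e t, q => [.last (CondOb.mk q (.neg e t))]
  | .unlessThen r1 p r2, q => norm r1 (q.and p.not) ++ norm r2 (q.and p)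
  | .unless r1 p, q => norm r1 (q.and p.not)
  | .otherwise e t r2, q => (norm r2 .tt).map (fun obc => .cons q e t obc)

/-- The set of normalized rules obtained from the original rule `when e and p then resp`. -/
def normalizeRule (e : E) (p : SProp M) (resp : Resp E M) : List (SRule E M) :=
  (norm resp p).map (fun obc => SRule.mk e .tt obc)

/-! ## Sizes (numbers of syntax tokens) -/

def STerm.size : STerm M → ℕ
  | .const _ => 1
  | .meas _ => 1
  | .neg t => t.size + 1
  | .add a b => a.size + b.size + 1
  | .smul _ t => t.size + 2

def SProp.size : SProp M → ℕ
  | .tt => 1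
  | .ff => 1
  | .eq a b => a.size + b.size + 1
  | .ge a b => a.size + b.size + 1
  | .not p => p.size + 1
  | .and p q => p.size + q.size + 1
  | .or p q => p.size + q.size + 1

def Oblig.size : Oblig E M → ℕ
  | .pos _ t => t.size + 2
  | .neg _ t => t.size + 3

def CondOb.size (c : CondOb E M) : ℕ := c.cond.size + c.ob.size + 1

def Chain.size : Chain E M → ℕ
  | .last c => c.size
  | .cons p _ t rest => p.size + t.size + rest.size + 4

def SRule.size (r : SRule E M) : ℕ := r.cond.size + r.chain.size + 3

def Resp.size : Resp E M → ℕ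
  | .pos _ t => t.size + 2
  | .neg _ t => t.size + 3
  | .otherwise _ t r => t.size + r.size + 3
  | .unless r p => r.size + p.size + 1
  | .unlessThen r p r2 => r.size + p.size + r2.size + 2

/-- The size of an original SLEEC rule `when e and p then resp`. -/
def origRuleSize (_e : E) (p : SProp M) (resp : Resp E M) : ℕ := p.size + resp.size + 3

/-- The total size of a list of normalized rules. -/
def rulesSize (l : List (SRule E M)) : ℕ := (l.map SRule.size).sum

/-!
Both sides say that no trace of `L(Rules)` contains a state triggering `r`. A triggering
state of an accepted trace `σ` is the last state of a prefix of `σ`; that prefix, with no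
constraint on future measures, is an `r`-triggering situation which `σ` resolves.
Conversely, an accepted trace resolving a triggering situation contains its last state.
-/

theorem _root_.List.exists_isPrefix_getLast_eq {α : Type*} {l : List α} {x : α} (hx : x ∈ l) :
    ∃ (l' : List α) (h : l' ≠ []), l' <+: l ∧ l'.getLast h = x := by
  obtain ⟨s, t, rfl⟩ := List.mem_iff_append.mp hx
  exact ⟨s ++ [x], List.concat_ne_nil x s, by simp, List.getLast_append_singleton s⟩

def SRule.TriggeredBy (r : SRule E M) (st : State E M) : Prop :=
  r.event ∈ st.evts ∧ r.cond.eval st.msr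

def Trace.ofIsPrefix (σ : Trace E M) {l : List (State E M)} (h : l <+: σ.states) :
    Trace E M :=
  ⟨l, σ.increasing.sublist h.sublist⟩

theorem vacuouslyConflicting_iff_forall_not_triggeredBy {Rules : Set (SRule E M)}
    {r : SRule E M} :
    VacuouslyConflicting Rules r ↔ ∀ σ ∈ lang Rules, ∀ st ∈ σ.states, ¬ r.TriggeredBy st := by
  simp only [VacuouslyConflicting, SRule.TriggeredBy, List.mem_iff_get, forall_exists_index,
    forall_apply_eq_imp_iff, not_and_or]

theorem situationallyConflicting_of_forall_not_isPrefix {Rules : Set (SRule E M)}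
    {s : Situation E M} (h : ∀ σ ∈ lang Rules, ¬ s.prefixTr.states <+: σ.states) :
    SituationallyConflicting Rules s :=
  fun ⟨σ, hpre, _, hσ⟩ => h σ hσ hpre

theorem not_situationallyConflicting_ofIsPrefix {Rules : Set (SRule E M)} {σ : Trace E M}
    (hσ : σ ∈ lang Rules) {l : List (State E M)} (hpre : l <+: σ.states) :
    ¬ SituationallyConflicting Rules ⟨σ.ofIsPrefix hpre, fun _ _ => none⟩ :=
  fun h => h ⟨σ, hpre, fun _ _ _ _ hval => (by cases hval), hσ⟩

/-- `r ∈ Rules` is vacuously conflicting in the finite rule set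
`Rules` iff `r` is situationally conflicting with respect to every `r`-triggering
situation. -/
theorem vacuouslyConflicting_iff_forall_situationallyConflicting
    {E M : Type} [Fintype E] [Fintype M]
    (Rules : Set (SRule E M)) (hfin : Rules.Finite)
    (r : SRule E M) (hr : r ∈ Rules) :
    VacuouslyConflicting Rules r ↔
      ∀ s : Situation E M, s.Triggering r → SituationallyConflicting Rules s := by
  rw [vacuouslyConflicting_iff_forall_not_triggeredBy]
  constructor
  · rintro hvac s ⟨hne, htrig⟩
    exact situationallyConflicting_of_forall_not_isPrefix fun σ hσ hpre =>
      hvac σ hσ _ (hpre.subset (List.getLast_mem hne)) htrig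
  · intro hsc σ hσ st hst htrig
    obtain ⟨l, hne, hpre, rfl⟩ := List.exists_isPrefix_getLast_eq hst
    exact not_situationallyConflicting_ofIsPrefix hσ hpre (hsc _ ⟨hne, htrig⟩)

end SleecForm
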